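/- Let n ≥ 1 and let m be a subspace of the space of alternating 2-forms on ℝⁿ such that the linear map from alternating 3-forms on ℝⁿ to linear maps ℝⁿ → m, sending T to the map X ↦ proj_m(T(X,·,·)), is surjective. Then 3·dim g ≥ n² − 1, where g denotes the orthogonal complement of m in the space of alternating 2-forms, i.e. dim g = n(n−1)/2 − dim m. Equivalently, 6·dim m ≤ (n−1)(n−2). -/

import Mathlib

open scoped BigOperators RealInnerProductSpace

noncomputable section

/-- `n`-dimensional Euclidean space. -/
abbrev E (n : ℕ) := EuclideanSpace ℝ (Fin n)

/-- Alternating 2-forms on `ℝⁿ`. -/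
abbrev Form2 (n : ℕ) := (E n) [⋀^Fin 2]→ₗ[ℝ] ℝ

/-- Alternating 3-forms on `ℝⁿ`. -/
abbrev Form3 (n : ℕ) := (E n) [⋀^Fin 3]→ₗ[ℝ] ℝ

/-- The standard orthonormal basis vectors of `ℝⁿ`. -/
def stdBasis {n : ℕ} (i : Fin n) : E n := EuclideanSpace.single i 1

/-- The inner product `⟨A,B⟩ = ∑_{i<j} A(e_i,e_j)·B(e_i,e_j)` on alternating 2-forms. -/
def ip {n : ℕ} (A B : Form2 n) : ℝ :=
  ∑ i : Fin n, ∑ j : Fin n, if i < j then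
    A ![stdBasis i, stdBasis j] * B ![stdBasis i, stdBasis j] else 0

/-- The contraction `(s ⌟ T)(X) = ∑_{i<j} s(e_i,e_j)·T(e_i,e_j,X)` of a 3-form by a 2-form. -/
def hook {n : ℕ} (s : Form2 n) (T : Form3 n) (X : E n) : ℝ :=
  ∑ i : Fin n, ∑ j : Fin n, if i < j then
    s ![stdBasis i, stdBasis j] * T ![stdBasis i, stdBasis j, X] else 0

/-- `IsOrthProj W p q` : `q` is the orthogonal projection (w.r.t. `ip`) of `p`
onto the subspace `W` of alternating 2-forms. -/
def IsOrthProj {n : ℕ} (W : Submodule ℝ (Form2 n)) (p q : Form2 n) : Prop :=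
  q ∈ W ∧ ∀ r ∈ W, ip (p - q) r = 0

/-! Because `ip` is positive definite, `m` meets its `ip`-orthogonal complement `m^⊥` only in `0`,
so `m → Λ²/m^⊥` is injective and hence so is postcomposition `Hom(ℝⁿ, m) → Hom(ℝⁿ, Λ²/m^⊥)`.
The hypothesis puts the image of this embedding inside the image of `Λ³ → Hom(ℝⁿ, Λ²/m^⊥)`,
`T ↦ (X ↦ [T(X,·,·)])`. Therefore `n · dim m ≤ dim Λ³ = C(n,3)`, and `6·C(n,3) = n(n-1)(n-2)`. -/

theorem AlternatingMap.eq_zero_of_apply_basis_lt {R M N ι : Type*} [CommRing R] [AddCommGroup M]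
    [Module R M] [AddCommGroup N] [Module R N] [LinearOrder ι] (b : Module.Basis ι R M)
    {f : M [⋀^Fin 2]→ₗ[R] N} (h : ∀ i j, i < j → f ![b i, b j] = 0) : f = 0 := by
  refine b.ext_alternating fun v hv => ?_
  have hv' : (fun k => b (v k)) = ![b (v 0), b (v 1)] := by
    funext k; fin_cases k <;> rfl
  rw [hv', AlternatingMap.zero_apply]
  rcases lt_or_gt_of_ne (hv.ne (by decide : (0 : Fin 2) ≠ 1)) with hlt | hgt
  · exact h _ _ hlt
  · have hswap : ![b (v 0), b (v 1)] = ![b (v 1), b (v 0)] ∘ Equiv.swap 0 1 := by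
      funext k; fin_cases k <;> rfl
    rw [hswap, f.map_swap _ (by decide), h _ _ hgt, neg_zero]

def ipForm (n : ℕ) : LinearMap.BilinForm ℝ (Form2 n) :=
  LinearMap.mk₂ ℝ ip
    (fun p q r => by
      simp only [ip, ← Finset.sum_add_distrib]; congr! 2; split_ifs <;> simp [add_mul])
    (fun c p r => by
      simp only [ip, smul_eq_mul, Finset.mul_sum]; congr! 2; split_ifs <;> simp [mul_assoc])
    (fun p q r => by
      simp only [ip, ← Finset.sum_add_distrib]; congr! 2; split_ifs <;> simp [mul_add])
    (fun c p r => by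
      simp only [ip, smul_eq_mul, Finset.mul_sum]; congr! 2; split_ifs <;> simp [mul_left_comm])

theorem eq_zero_of_ip_self_eq_zero {n : ℕ} {p : Form2 n} (h : ip p p = 0) : p = 0 := by
  refine AlternatingMap.eq_zero_of_apply_basis_lt (EuclideanSpace.basisFun (Fin n) ℝ).toBasis
    fun i j hij => ?_
  have hnonneg : ∀ i j : Fin n, 0 ≤ if i < j then
      p ![stdBasis i, stdBasis j] * p ![stdBasis i, stdBasis j] else 0 := fun i j => by
    split_ifs <;> simp [mul_self_nonneg]
  have hrow := (Finset.sum_eq_zero_iff_of_nonneg fun i _ =>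
    Finset.sum_nonneg fun j _ => hnonneg i j).1 h i (Finset.mem_univ _)
  have hij' := (Finset.sum_eq_zero_iff_of_nonneg fun j _ => hnonneg i j).1 hrow j
    (Finset.mem_univ _)
  simpa [hij, stdBasis] using hij'

instance AlternatingMap.instFiniteDimensional {K M : Type*} [Field K] [AddCommGroup M]
    [Module K M] [FiniteDimensional K M] {k : ℕ} : FiniteDimensional K (M [⋀^Fin k]→ₗ[K] K) :=
  Module.Finite.equiv exteriorPower.alternatingMapLinearEquiv.symm

theorem finrank_alternatingMap (K M : Type*) [Field K] [AddCommGroup M] [Module K M]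
    [FiniteDimensional K M] (k : ℕ) :
    Module.finrank K (M [⋀^Fin k]→ₗ[K] K) = (Module.finrank K M).choose k := by
  rw [exteriorPower.alternatingMapLinearEquiv.finrank_eq, Subspace.dual_finrank_eq,
    exteriorPower.finrank_eq]

theorem finrank_linearMap_le_of_forall_exists_sub_mem {K U V X : Type*} [Field K]
    [AddCommGroup U] [Module K U] [FiniteDimensional K U] [AddCommGroup V] [Module K V]
    [AddCommGroup X] [Module K X] {W C : Submodule K V} (hWC : Disjoint W C)
    (f : U →ₗ[K] X →ₗ[K] V) (hf : ∀ Γ : X →ₗ[K] W, ∃ u, ∀ x, f u x - Γ x ∈ C) :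
    Module.finrank K (X →ₗ[K] W) ≤ Module.finrank K U := by
  let j : W →ₗ[K] V ⧸ C := C.mkQ ∘ₗ W.subtype
  have hj : Function.Injective j := by
    rw [← LinearMap.ker_eq_bot, LinearMap.ker_comp, Submodule.ker_mkQ,
      ← Submodule.disjoint_iff_comap_eq_bot]
    exact hWC
  let post : (X →ₗ[K] W) →ₗ[K] X →ₗ[K] V ⧸ C := LinearMap.llcomp K X W (V ⧸ C) j
  have hpost : Function.Injective post := fun Γ Γ' h =>
    LinearMap.ext fun x => hj (LinearMap.congr_fun h x)
  let Φ : U →ₗ[K] X →ₗ[K] V ⧸ C := LinearMap.llcomp K X V (V ⧸ C) C.mkQ ∘ₗ f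
  have hrange : LinearMap.range post ≤ LinearMap.range Φ := by
    rintro _ ⟨Γ, rfl⟩
    obtain ⟨u, hu⟩ := hf Γ
    exact ⟨u, LinearMap.ext fun x => (Submodule.Quotient.eq C).2 (hu x)⟩
  calc Module.finrank K (X →ₗ[K] W) = Module.finrank K (LinearMap.range post) :=
        (LinearMap.finrank_range_of_inj hpost).symm
    _ ≤ Module.finrank K (LinearMap.range Φ) := Submodule.finrank_mono hrange
    _ ≤ Module.finrank K U := Φ.finrank_range_le

theorem mul_finrank_le_choose_three {n : ℕ} (m : Submodule ℝ (Form2 n))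
    (hsurj : ∀ Γ : E n →ₗ[ℝ] Form2 n, (∀ X, Γ X ∈ m) →
      ∃ T : Form3 n, ∀ X, IsOrthProj m (T.curryLeft X) (Γ X)) :
    n * Module.finrank ℝ m ≤ n.choose 3 := by
  have hdisj : Disjoint m (m.orthogonalBilin (ipForm n).flip) :=
    Submodule.disjoint_def.2 fun p hp hp' => eq_zero_of_ip_self_eq_zero (hp' p hp)
  have : Module.Free ℝ m := Module.Free.of_divisionRing ℝ m
  calc n * Module.finrank ℝ m = Module.finrank ℝ (E n →ₗ[ℝ] m) := by
        rw [Module.finrank_linearMap ℝ ℝ (E n) m, finrank_euclideanSpace_fin]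
    _ ≤ Module.finrank ℝ (Form3 n) :=
        finrank_linearMap_le_of_forall_exists_sub_mem hdisj AlternatingMap.curryLeftLinearMap
          fun Γ => ?_
    _ = n.choose 3 := by rw [finrank_alternatingMap, finrank_euclideanSpace_fin]
  obtain ⟨T, hT⟩ := hsurj (m.subtype ∘ₗ Γ) fun X => (Γ X).2
  exact ⟨T, fun X r hr => (hT X).2 r hr⟩

theorem Nat.six_mul_choose_three (n : ℕ) : 6 * n.choose 3 = n * ((n - 1) * (n - 2)) := by
  rw [show 6 = Nat.factorial 3 from rfl, ← Nat.descFactorial_eq_factorial_mul_choose]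
  simp only [Nat.descFactorial_succ, Nat.descFactorial_zero, Nat.sub_zero]
  ring

/-- the dimension bound of Example 5.4 of the paper.
If `m` is a subspace of the alternating 2-forms on `ℝⁿ` such that every linear map
`Γ : ℝⁿ → m` arises as `X ↦ proj_m(T(X,·,·))` for some alternating 3-form `T`,
then `6·dim m ≤ (n−1)(n−2)`; equivalently, `3·dim g ≥ n² − 1` for the orthogonal
complement `g` of `m`. -/
theorem stmt_9 {n : ℕ} (hn : 1 ≤ n) (m : Submodule ℝ (Form2 n))
    (hsurj : ∀ Γ : E n →ₗ[ℝ] Form2 n, (∀ X, Γ X ∈ m) →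
      ∃ T : Form3 n, ∀ X, IsOrthProj m (T.curryLeft X) (Γ X)) :
    6 * Module.finrank ℝ m ≤ (n - 1) * (n - 2) := by
  refine Nat.le_of_mul_le_mul_left ?_ hn
  calc n * (6 * Module.finrank ℝ m) = 6 * (n * Module.finrank ℝ m) := by ring
    _ ≤ 6 * n.choose 3 := Nat.mul_le_mul_left 6 (mul_finrank_le_choose_three m hsurj)
    _ = n * ((n - 1) * (n - 2)) := Nat.six_mul_choose_three n

end
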